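/- In the Galois order setup, Γ = Λ^G is a Harish-Chandra subring of the skew monoid ring ℒ = L∗ℳ: for every x ∈ ℒ, the Γ-bimodule ΓxΓ is finitely generated both as a left and as a right Γ-module. -/

import Mathlib

section SkewDefs

variable {L : Type*} [Field L]

/-- The action of an automorphism `g` on `ℒ = L ∗ ℳ` by `g(aν) = g(a)(gνg⁻¹)`. -/
noncomputable def gactR (g : RingAut L) (X : RingAut L →₀ L) : RingAut L →₀ L :=
  X.sum fun ν c => Finsupp.single (g * ν * g⁻¹) (g c)

/-- Left multiplication of `X ∈ ℒ` by a scalar `γ ∈ L`. -/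
noncomputable def lsm (γ : L) (X : RingAut L →₀ L) : RingAut L →₀ L :=
  X.sum fun ν c => Finsupp.single ν (γ * c)

/-- Right multiplication of `X ∈ ℒ` by a scalar `γ ∈ L`: `(cν)·γ = (c ν(γ)) ν`. -/
noncomputable def rsm (X : RingAut L →₀ L) (γ : L) : RingAut L →₀ L :=
  X.sum fun ν c => Finsupp.single ν (c * ν γ)

/-- `Γ = Λ^G` as a subset of `L`. -/
def GammaSet (G : Subgroup (RingAut L)) (Λ : Subring L) : Set L :=
  {a : L | a ∈ Λ ∧ ∀ g ∈ G, g a = a}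

/-- The `Γ`-bimodule `ΓXΓ` generated by `X` inside `ℒ`. -/
noncomputable def gammaBimod (G : Subgroup (RingAut L)) (Λ : Subring L)
    (X : RingAut L →₀ L) : AddSubgroup (RingAut L →₀ L) :=
  AddSubgroup.closure
    {Y | ∃ γ₁ ∈ GammaSet G Λ, ∃ γ₂ ∈ GammaSet G Λ, Y = lsm γ₁ (rsm X γ₂)}

end SkewDefs

/-! For `y ∈ ΓXΓ` every coefficient `y ν` lies in `X ν · Λ`, so `y ↦ ((X ν)⁻¹ y ν)_ν` embeds
`ΓXΓ`, with left multiplication by `Γ`, into the noetherian `Γ`-module `Λ^{supp X}`. The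
anti-automorphism `cν ↦ ν⁻¹(c) ν⁻¹` of `ℒ` exchanges left and right multiplication by `Γ` and
maps `ΓXΓ` into `ΓX'Γ` with `supp X' = (supp X)⁻¹`, which reduces the right-hand statement to
the left-hand one for `X'`. -/

open Submodule

theorem Submodule.mem_addSubgroupClosure_of_mem_span {R M : Type*} [Ring R] [AddCommGroup M]
    [Module R M] {s : Set M} {x : M} (hx : x ∈ span R s) :
    x ∈ AddSubgroup.closure {z | ∃ r : R, ∃ w ∈ s, z = r • w} := by
  induction hx using Submodule.closure_induction with
  | zero => exact zero_mem _
  | add _ _ _ _ hx hy => exact add_mem hx hy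
  | smul_mem r w hw => exact AddSubgroup.subset_closure ⟨r, w, hw, rfl⟩

lemma Finsupp.sum_single_apply {α M N : Type*} [Zero M] [AddCommMonoid N] (Y : α →₀ M)
    (f : α → M → N) (hf : ∀ a, f a 0 = 0) (b : α) :
    (Y.sum fun a c => Finsupp.single a (f a c)) b = f b (Y b) := by
  classical
  simp only [Finsupp.sum_apply, Finsupp.single_apply]
  rw [Finsupp.sum, Finset.sum_ite_eq' Y.support b (fun a => f a (Y a))]
  split_ifs with h
  · rfl
  · rw [Finsupp.notMem_support_iff.mp h, hf]

section SkewMonoidRing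

variable {L : Type*} [Field L]

@[simp]
lemma lsm_apply (γ : L) (Y : RingAut L →₀ L) (ν : RingAut L) : lsm γ Y ν = γ * Y ν :=
  Finsupp.sum_single_apply Y (fun _ c => γ * c) (fun _ => mul_zero γ) ν

@[simp]
lemma rsm_apply (Y : RingAut L →₀ L) (γ : L) (ν : RingAut L) : rsm Y γ ν = Y ν * ν γ :=
  Finsupp.sum_single_apply Y (fun ν c => c * ν γ) (fun _ => zero_mul _) ν

lemma lsm_eq_smul (γ : L) (Y : RingAut L →₀ L) : lsm γ Y = γ • Y := by
  ext ν
  simp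

lemma rsm_lsm (γ δ : L) (Y : RingAut L →₀ L) : rsm (lsm γ Y) δ = lsm γ (rsm Y δ) := by
  ext ν
  simp [mul_assoc]

/-- The anti-automorphism `cν ↦ ν⁻¹(c) ν⁻¹` of the skew monoid ring. -/
noncomputable def skewReverse : (RingAut L →₀ L) →+ (RingAut L →₀ L) where
  toFun Y := Finsupp.onFinset (Y.support.map (Equiv.inv _).toEmbedding) (fun μ => μ (Y μ⁻¹))
    fun μ hμ => by simpa using fun h => hμ (by rw [h, map_zero])
  map_zero' := by ext; simp
  map_add' Y Z := by ext; simp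

@[simp]
lemma skewReverse_apply (Y : RingAut L →₀ L) (μ : RingAut L) :
    skewReverse Y μ = μ (Y μ⁻¹) := rfl

@[simp]
lemma skewReverse_skewReverse (Y : RingAut L →₀ L) : skewReverse (skewReverse Y) = Y := by
  ext μ
  simp

lemma skewReverse_lsm (γ : L) (Y : RingAut L →₀ L) :
    skewReverse (lsm γ Y) = rsm (skewReverse Y) γ := by
  ext μ
  simp [mul_comm]

lemma skewReverse_rsm (Y : RingAut L →₀ L) (γ : L) :
    skewReverse (rsm Y γ) = lsm γ (skewReverse Y) := by
  ext μ
  simp [mul_comm]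

lemma skewReverse_mem_gammaBimod {G : Subgroup (RingAut L)} {Λ : Subring L}
    {X y : RingAut L →₀ L} (hy : y ∈ gammaBimod G Λ X) :
    skewReverse y ∈ gammaBimod G Λ (skewReverse X) := by
  suffices (gammaBimod G Λ X).map skewReverse ≤ gammaBimod G Λ (skewReverse X) from
    this (AddSubgroup.mem_map_of_mem _ hy)
  rw [gammaBimod, AddMonoidHom.map_closure, AddSubgroup.closure_le]
  rintro _ ⟨_, ⟨γ₁, hγ₁, γ₂, hγ₂, rfl⟩, rfl⟩
  exact AddSubgroup.subset_closure
    ⟨γ₂, hγ₂, γ₁, hγ₁, by rw [skewReverse_lsm, skewReverse_rsm, rsm_lsm]⟩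

end SkewMonoidRing

section GammaModules

variable {L : Type*} [Field L] (G : Subgroup (RingAut L)) (Λ : Subring L)

def gammaSubring : Subring L where
  carrier := GammaSet G Λ
  mul_mem' ha hb := ⟨Λ.mul_mem ha.1 hb.1, fun g hg => by rw [map_mul, ha.2 g hg, hb.2 g hg]⟩
  one_mem' := ⟨Λ.one_mem, fun g _ => map_one g⟩
  add_mem' ha hb := ⟨Λ.add_mem ha.1 hb.1, fun g hg => by rw [map_add, ha.2 g hg, hb.2 g hg]⟩
  zero_mem' := ⟨Λ.zero_mem, fun g _ => map_zero g⟩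
  neg_mem' ha := ⟨Λ.neg_mem ha.1, fun g hg => by rw [map_neg, ha.2 g hg]⟩

def lambdaSubmodule : Submodule (gammaSubring G Λ) L where
  carrier := Λ
  add_mem' := Λ.add_mem
  zero_mem' := Λ.zero_mem
  smul_mem' c _ ha := Λ.mul_mem c.2.1 ha

noncomputable def gammaBimodSubmodule (X : RingAut L →₀ L) :
    Submodule (gammaSubring G Λ) (RingAut L →₀ L) where
  __ := (gammaBimod G Λ X).toAddSubmonoid
  smul_mem' c y hy := by
    suffices gammaBimod G Λ X ≤
        (gammaBimod G Λ X).comap (DistribSMul.toAddMonoidHom _ (c : L)) from this hy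
    rw [gammaBimod, AddSubgroup.closure_le]
    rintro _ ⟨γ₁, hγ₁, γ₂, hγ₂, rfl⟩
    refine AddSubgroup.subset_closure ⟨c * γ₁, (gammaSubring G Λ).mul_mem c.2 hγ₁, γ₂, hγ₂, ?_⟩
    simp [lsm_eq_smul, smul_smul]

def LeftFG (A : AddSubgroup (RingAut L →₀ L)) : Prop :=
  ∃ t : Finset (RingAut L →₀ L), (↑t : Set (RingAut L →₀ L)) ⊆ (A : Set (RingAut L →₀ L)) ∧
    ∀ y ∈ A, y ∈ AddSubgroup.closure
      {z | ∃ γ ∈ GammaSet G Λ, ∃ w ∈ (↑t : Set (RingAut L →₀ L)), z = lsm γ w}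

def RightFG (A : AddSubgroup (RingAut L →₀ L)) : Prop :=
  ∃ t : Finset (RingAut L →₀ L), (↑t : Set (RingAut L →₀ L)) ⊆ (A : Set (RingAut L →₀ L)) ∧
    ∀ y ∈ A, y ∈ AddSubgroup.closure
      {z | ∃ γ ∈ GammaSet G Λ, ∃ w ∈ (↑t : Set (RingAut L →₀ L)), z = rsm w γ}

variable {G Λ} {X : RingAut L →₀ L}

theorem isNoetherian_lambdaSubmodule
    (hnoeth : ∀ N : AddSubgroup L, (N : Set L) ⊆ (Λ : Set L) →
      (∀ γ ∈ GammaSet G Λ, ∀ a ∈ N, γ * a ∈ N) →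
      ∃ s : Finset L, (↑s : Set L) ⊆ (N : Set L) ∧
        ∀ y ∈ N, y ∈ AddSubgroup.closure
          {z | ∃ γ ∈ GammaSet G Λ, ∃ w ∈ (↑s : Set L), z = γ * w}) :
    IsNoetherian (gammaSubring G Λ) (lambdaSubmodule G Λ) := by
  refine isNoetherian_submodule.mpr fun N hN => ?_
  obtain ⟨s, hsN, hNs⟩ := hnoeth N.toAddSubgroup hN fun γ hγ a ha => N.smul_mem ⟨γ, hγ⟩ ha
  refine ⟨s, le_antisymm (span_le.mpr hsN) fun y hy => ?_⟩
  refine (AddSubgroup.closure_le (span _ (s : Set L)).toAddSubgroup).mpr ?_ (hNs y hy)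
  rintro _ ⟨γ, hγ, w, hw, rfl⟩
  exact smul_mem _ (⟨γ, hγ⟩ : gammaSubring G Λ) (subset_span hw)

theorem exists_coeff_of_mem_gammaBimod (hX : ∀ ν, X ν ≠ 0 → ∀ γ ∈ GammaSet G Λ, ν γ ∈ Λ)
    {y : RingAut L →₀ L} (hy : y ∈ gammaBimod G Λ X) (ν : RingAut L) : ∃ a ∈ Λ, y ν = X ν * a := by
  induction hy using AddSubgroup.closure_induction with
  | mem _ h =>
    obtain ⟨γ₁, hγ₁, γ₂, hγ₂, rfl⟩ := h
    by_cases hν : X ν = 0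
    · exact ⟨0, Λ.zero_mem, by simp [hν]⟩
    · exact ⟨γ₁ * ν γ₂, Λ.mul_mem hγ₁.1 (hX ν hν γ₂ hγ₂), by simp; ring⟩
  | zero => exact ⟨0, Λ.zero_mem, by simp⟩
  | add _ _ _ _ hy hz =>
    obtain ⟨a, ha, hya⟩ := hy
    obtain ⟨b, hb, hzb⟩ := hz
    exact ⟨a + b, Λ.add_mem ha hb, by simp [hya, hzb, mul_add]⟩
  | neg _ _ hy =>
    obtain ⟨a, ha, hya⟩ := hy
    exact ⟨-a, Λ.neg_mem ha, by simp [hya]⟩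

noncomputable def gammaBimodCoeff (hX : ∀ ν, X ν ≠ 0 → ∀ γ ∈ GammaSet G Λ, ν γ ∈ Λ) :
    gammaBimodSubmodule G Λ X →ₗ[gammaSubring G Λ] (X.support → lambdaSubmodule G Λ) where
  toFun y ν := ⟨(X ν)⁻¹ * (y : RingAut L →₀ L) ν, by
    obtain ⟨a, ha, hya⟩ := exists_coeff_of_mem_gammaBimod hX y.2 ν
    rwa [hya, inv_mul_cancel_left₀ (Finsupp.mem_support_iff.mp ν.2)]⟩
  map_add' y z := by ext; simp [mul_add]
  map_smul' c y := by ext; simp [Subring.smul_def, mul_left_comm]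

theorem gammaBimodCoeff_injective (hX : ∀ ν, X ν ≠ 0 → ∀ γ ∈ GammaSet G Λ, ν γ ∈ Λ) :
    Function.Injective (gammaBimodCoeff hX) := by
  refine (injective_iff_map_eq_zero _).mpr fun y hy => Subtype.ext (Finsupp.ext fun ν => ?_)
  by_cases hν : ν ∈ X.support
  · have := congrArg Subtype.val (congrFun hy ⟨ν, hν⟩)
    simpa [gammaBimodCoeff, Finsupp.mem_support_iff.mp hν] using this
  · obtain ⟨a, -, hya⟩ := exists_coeff_of_mem_gammaBimod hX y.2 ν
    simp [hya, Finsupp.notMem_support_iff.mp hν]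

theorem leftFG_gammaBimod [IsNoetherian (gammaSubring G Λ) (lambdaSubmodule G Λ)]
    (hX : ∀ ν, X ν ≠ 0 → ∀ γ ∈ GammaSet G Λ, ν γ ∈ Λ) :
    LeftFG G Λ (gammaBimod G Λ X) := by
  have := isNoetherian_of_injective _ (gammaBimodCoeff_injective hX)
  obtain ⟨t, ht⟩ := Module.Finite.iff_fg.mp (inferInstance :
    Module.Finite (gammaSubring G Λ) (gammaBimodSubmodule G Λ X))
  have hsub : (t : Set (RingAut L →₀ L)) ⊆ gammaBimodSubmodule G Λ X := ht ▸ subset_span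
  refine ⟨t, hsub, fun y hy => ?_⟩
  have hy : y ∈ span (gammaSubring G Λ) (t : Set (RingAut L →₀ L)) := by rwa [ht]
  refine AddSubgroup.closure_mono ?_ (mem_addSubgroupClosure_of_mem_span hy)
  rintro _ ⟨c, w, hw, rfl⟩
  exact ⟨c, c.2, w, hw, (lsm_eq_smul _ _).symm⟩

theorem rightFG_gammaBimod [IsNoetherian (gammaSubring G Λ) (lambdaSubmodule G Λ)]
    (hX : ∀ ν, X ν ≠ 0 → ∀ γ ∈ GammaSet G Λ, ν⁻¹ γ ∈ Λ) :
    RightFG G Λ (gammaBimod G Λ X) := by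
  classical
  obtain ⟨t, htA, ht⟩ := leftFG_gammaBimod (X := skewReverse X) fun μ hμ γ hγ => by
    simpa using hX μ⁻¹ (by simpa using hμ) γ hγ
  refine ⟨t.image skewReverse, ?_, fun y hy => ?_⟩
  · intro _ hw'
    obtain ⟨w, hw, rfl⟩ := Finset.mem_image.mp hw'
    simpa using skewReverse_mem_gammaBimod (htA hw)
  · have := AddSubgroup.mem_map_of_mem skewReverse (ht _ (skewReverse_mem_gammaBimod hy))
    rw [AddMonoidHom.map_closure, skewReverse_skewReverse] at this
    refine AddSubgroup.closure_mono ?_ this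
    rintro _ ⟨_, ⟨γ, hγ, w, hw, rfl⟩, rfl⟩
    exact ⟨γ, hγ, skewReverse w, Finset.mem_image_of_mem _ hw, skewReverse_lsm γ w⟩

end GammaModules

theorem stmt18_general (L : Type*) [Field L] (G : Subgroup (RingAut L))
    (M : Submonoid (RingAut L))
    (Λ : Subring L)
    (hMΛ : ∀ ν ∈ M, ∀ a : L, a ∈ Λ ↔ ν a ∈ Λ)
    (hnoeth : ∀ N : AddSubgroup L, (N : Set L) ⊆ (Λ : Set L) →
      (∀ γ ∈ GammaSet G Λ, ∀ a ∈ N, γ * a ∈ N) →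
      ∃ s : Finset L, (↑s : Set L) ⊆ (N : Set L) ∧
        ∀ y ∈ N, y ∈ AddSubgroup.closure
          {z | ∃ γ ∈ GammaSet G Λ, ∃ w ∈ (↑s : Set L), z = γ * w})
    (X : RingAut L →₀ L)
    (hXsupp : ∀ ν, X ν ≠ 0 → ν ∈ M) :
    (∃ t : Finset (RingAut L →₀ L),
        (↑t : Set (RingAut L →₀ L)) ⊆ (gammaBimod G Λ X : Set (RingAut L →₀ L)) ∧
        ∀ y ∈ gammaBimod G Λ X, y ∈ AddSubgroup.closure
          {z | ∃ γ ∈ GammaSet G Λ, ∃ w ∈ (↑t : Set (RingAut L →₀ L)), z = lsm γ w})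
    ∧ (∃ t : Finset (RingAut L →₀ L),
        (↑t : Set (RingAut L →₀ L)) ⊆ (gammaBimod G Λ X : Set (RingAut L →₀ L)) ∧
        ∀ y ∈ gammaBimod G Λ X, y ∈ AddSubgroup.closure
          {z | ∃ γ ∈ GammaSet G Λ, ∃ w ∈ (↑t : Set (RingAut L →₀ L)), z = rsm w γ}) := by
  have := isNoetherian_lambdaSubmodule hnoeth
  refine ⟨leftFG_gammaBimod fun ν hν γ hγ => (hMΛ ν (hXsupp ν hν) γ).mp hγ.1,
    rightFG_gammaBimod fun ν hν γ hγ => (hMΛ ν (hXsupp ν hν) _).mpr ?_⟩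
  simpa using hγ.1

/-- In the Galois order setup, `Γ = Λ^G` is a Harish-Chandra subring of `ℒ = L ∗ ℳ`:
for every `X ∈ ℒ`, the `Γ`-bimodule `ΓXΓ` is finitely generated both as a left and as a
right `Γ`-module. -/
theorem stmt18 (L : Type*) [Field L] (G : Subgroup (RingAut L))
    (hGfin : (G : Set (RingAut L)).Finite)
    (M : Submonoid (RingAut L))
    (hsep : ∀ ν₁ ∈ M, ∀ ν₂ ∈ M, ν₁ * ν₂⁻¹ ∈ G → ν₁ = ν₂)
    (hinv : ∀ g ∈ G, ∀ ν ∈ M, g * ν * g⁻¹ ∈ M)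
    (Λ : Subring L)
    (hGΛ : ∀ g ∈ G, ∀ a ∈ Λ, g a ∈ Λ)
    (hMΛ : ∀ ν ∈ M, ∀ a : L, a ∈ Λ ↔ ν a ∈ Λ)
    (hnoeth : ∀ N : AddSubgroup L, (N : Set L) ⊆ (Λ : Set L) →
      (∀ γ ∈ GammaSet G Λ, ∀ a ∈ N, γ * a ∈ N) →
      ∃ s : Finset L, (↑s : Set L) ⊆ (N : Set L) ∧
        ∀ y ∈ N, y ∈ AddSubgroup.closure
          {z | ∃ γ ∈ GammaSet G Λ, ∃ w ∈ (↑s : Set L), z = γ * w})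
    (X : RingAut L →₀ L)
    (hXsupp : ∀ ν, X ν ≠ 0 → ν ∈ M) :
    (∃ t : Finset (RingAut L →₀ L),
        (↑t : Set (RingAut L →₀ L)) ⊆ (gammaBimod G Λ X : Set (RingAut L →₀ L)) ∧
        ∀ y ∈ gammaBimod G Λ X, y ∈ AddSubgroup.closure
          {z | ∃ γ ∈ GammaSet G Λ, ∃ w ∈ (↑t : Set (RingAut L →₀ L)), z = lsm γ w})
    ∧ (∃ t : Finset (RingAut L →₀ L),
        (↑t : Set (RingAut L →₀ L)) ⊆ (gammaBimod G Λ X : Set (RingAut L →₀ L)) ∧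
        ∀ y ∈ gammaBimod G Λ X, y ∈ AddSubgroup.closure
          {z | ∃ γ ∈ GammaSet G Λ, ∃ w ∈ (↑t : Set (RingAut L →₀ L)), z = rsm w γ}) :=
  stmt18_general L G M Λ hMΛ hnoeth X hXsupp
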